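/- arXiv:2403.16843 — 2 statements merged into one kernel-verified Lean document; each statement's English description precedes it below -/
import Mathlib

section
/- Let d, T, Δ ∈ ℕ+ with Δ ≤ T, let ℓ_1, …, ℓ_T ∈ ℝ^d, and partition [T] into m = ⌈T/Δ⌉ consecutive batches T_1, …, T_m, each of size at most Δ. Let π_1, …, π_T ∈ Δ([d]) be policies, and suppose there is F ≥ 0 such that for every batch k ∈ [m] one has Σ_{t∈T_k} ⟨ℓ_t, π_t⟩ − min_{j∈[d]} Σ_{t∈T_k} ℓ_t(j) ≤ F. Then the dynamic regret satisfies Σ_{t=1}^T ⟨ℓ_t, π_t⟩ − Σ_{t=1}^T min_{j∈[d]} ℓ_t(j) ≤ (T/Δ + 1)·F + 2Δ·V_T, where V_T := Σ_{t=1}^{T−1} ‖ℓ_{t+1} − ℓ_t‖_∞. -/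
/-!
Cut the horizon into the batches `[kΔ, min((k+1)Δ, T))`. On a batch, the static comparator
`min_j Σ_t ℓ_t(j)` exceeds the dynamic one `Σ_t min_j ℓ_t(j)` by at most `2Δ` times the variation
of the losses inside the batch: the coordinate minimising the loss at the start of the batch stays
`2W`-close to optimal for every round whose loss is `W`-close in sup-norm to the starting one.
Summing the batch regret bound `F` and these gaps over the `⌈T/Δ⌉ ≤ T/Δ + 1` batches, the
variations of the batches add up to `V_T`.
-/

open Finset

lemma Finset.Ico_min_eq_Ico_min_min (a b N : ℕ) : Ico a (min b N) = Ico (min a N) (min b N) := by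
  ext t
  simp only [mem_Ico]
  omega

lemma Finset.sum_range_sum_Ico_of_monotone {M : Type*} [AddCommMonoid M] (g : ℕ → M)
    {f : ℕ → ℕ} (hf : Monotone f) (m : ℕ) :
    ∑ k ∈ range m, ∑ t ∈ Ico (f k) (f (k + 1)), g t = ∑ t ∈ Ico (f 0) (f m), g t := by
  induction m with
  | zero => simp
  | succ m ih =>
    rw [sum_range_succ, ih, sum_Ico_consecutive _ (hf m.zero_le) (hf m.le_succ)]

lemma Finset.sum_range_sum_Ico_mul_min {M : Type*} [AddCommMonoid M] (g : ℕ → M)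
    {m Δ N : ℕ} (h : N ≤ m * Δ) :
    ∑ k ∈ range m, ∑ t ∈ Ico (k * Δ) (min ((k + 1) * Δ) N), g t = ∑ t ∈ range N, g t := by
  have hf : Monotone fun k => min (k * Δ) N := fun a b hab =>
    min_le_min_right N (Nat.mul_le_mul_right Δ hab)
  refine (sum_congr rfl fun k _ => by rw [Ico_min_eq_Ico_min_min]).trans <|
    (sum_range_sum_Ico_of_monotone g hf m).trans ?_
  rw [zero_mul, Nat.zero_min, min_eq_right h, range_eq_Ico]

lemma norm_sub_le_sum_Ico_norm_sub {E : Type*} [SeminormedAddCommGroup E] (f : ℕ → E)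
    {a t : ℕ} (h : a ≤ t) : ‖f t - f a‖ ≤ ∑ s ∈ Ico a t, ‖f (s + 1) - f s‖ := by
  simpa only [dist_eq_norm'] using dist_le_Ico_sum_dist f h

section Comparator

variable {ι : Type*} [Fintype ι] [Nonempty ι]

lemma sub_le_iInf_of_norm_sub_le {x y : ι → ℝ} {W : ℝ} (h : ‖y - x‖ ≤ W) {j₀ : ι}
    (hj₀ : ∀ j, x j₀ ≤ x j) : y j₀ - 2 * W ≤ ⨅ j, y j := by
  have hcoord : ∀ j, |y j - x j| ≤ W := fun j =>
    (norm_le_pi_norm (y - x) j).trans h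
  refine le_ciInf fun j => ?_
  have h₀ := abs_le.1 (hcoord j₀)
  have hj := abs_le.1 (hcoord j)
  linarith [hj₀ j]

lemma iInf_sum_sub_sum_iInf_le {α : Type*} (s : Finset α) (f : α → ι → ℝ) (x : ι → ℝ)
    {W : ℝ} (h : ∀ t ∈ s, ‖f t - x‖ ≤ W) :
    (⨅ j, ∑ t ∈ s, f t j) - ∑ t ∈ s, ⨅ j, f t j ≤ 2 * #s * W := by
  obtain ⟨j₀, hj₀⟩ := Finite.exists_min x
  have hsum : ∑ t ∈ s, (f t j₀ - 2 * W) ≤ ∑ t ∈ s, ⨅ j, f t j :=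
    sum_le_sum fun t ht => sub_le_iInf_of_norm_sub_le (h t ht) hj₀
  rw [sum_sub_distrib, sum_const, nsmul_eq_mul] at hsum
  have hmin := ciInf_le (Finite.bddBelow_range fun j => ∑ t ∈ s, f t j) j₀
  linarith

lemma iInf_sum_sub_sum_iInf_le_batch (ℓ : ℕ → ι → ℝ) (Δ N k : ℕ) :
    (⨅ j, ∑ t ∈ Ico (k * Δ) (min ((k + 1) * Δ) N), ℓ t j) -
        ∑ t ∈ Ico (k * Δ) (min ((k + 1) * Δ) N), ⨅ j, ℓ t j ≤
      2 * Δ * ∑ s ∈ Ico (k * Δ) (min ((k + 1) * Δ) (N - 1)), ‖ℓ (s + 1) - ℓ s‖ := by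
  set W := ∑ s ∈ Ico (k * Δ) (min ((k + 1) * Δ) (N - 1)), ‖ℓ (s + 1) - ℓ s‖
  have hW : 0 ≤ W := sum_nonneg fun _ _ => norm_nonneg _
  rw [add_one_mul]
  have hclose : ∀ t ∈ Ico (k * Δ) (min (k * Δ + Δ) N), ‖ℓ t - ℓ (k * Δ)‖ ≤ W := by
    intro t ht
    rw [mem_Ico] at ht
    refine (norm_sub_le_sum_Ico_norm_sub ℓ ht.1).trans <|
      sum_le_sum_of_subset_of_nonneg ?_ fun _ _ _ => norm_nonneg _
    rw [add_one_mul]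
    exact Ico_subset_Ico_right (by omega)
  have hcard : #(Ico (k * Δ) (min (k * Δ + Δ) N)) ≤ Δ := by
    rw [Nat.card_Ico]
    omega
  calc _ ≤ 2 * #(Ico (k * Δ) (min (k * Δ + Δ) N)) * W := iInf_sum_sub_sum_iInf_le _ _ _ hclose
    _ ≤ 2 * Δ * W := by gcongr

end Comparator

lemma Nat.le_add_sub_one_div_mul {T Δ : ℕ} (hΔ : 0 < Δ) : T ≤ (T + Δ - 1) / Δ * Δ := by
  have := Nat.lt_div_mul_add (a := T + Δ - 1) hΔ
  omega

lemma Nat.cast_add_sub_one_div_le {T Δ : ℕ} (hΔ : 0 < Δ) :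
    (((T + Δ - 1) / Δ : ℕ) : ℝ) ≤ T / Δ + 1 := by
  have hΔ' : (0 : ℝ) < Δ := by exact_mod_cast hΔ
  calc (((T + Δ - 1) / Δ : ℕ) : ℝ) ≤ ((T + Δ - 1 : ℕ) : ℝ) / Δ := Nat.cast_div_le
    _ ≤ (T + Δ) / Δ := by gcongr; exact_mod_cast Nat.sub_le _ _
    _ = T / Δ + 1 := by rw [add_div, div_self hΔ'.ne']

theorem stmt_5_general (d T Δ : ℕ) (hd : 0 < d) (hΔ0 : 0 < Δ)
    (ℓ : ℕ → Fin d → ℝ) (π : ℕ → Fin d → ℝ)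
    (F : ℝ) (hF : 0 ≤ F)
    (hbatch : ∀ k < (T + Δ - 1) / Δ,
      (∑ t ∈ Finset.Ico (k * Δ) (min ((k + 1) * Δ) T), ∑ j, ℓ t j * π t j) -
        (⨅ j : Fin d, ∑ t ∈ Finset.Ico (k * Δ) (min ((k + 1) * Δ) T), ℓ t j) ≤ F) :
    (∑ t ∈ range T, ∑ j, ℓ t j * π t j) - ∑ t ∈ range T, ⨅ j : Fin d, ℓ t j ≤
      ((T : ℝ) / (Δ : ℝ) + 1) * F + 2 * Δ * ∑ t ∈ range (T - 1), ‖ℓ (t + 1) - ℓ t‖ := by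
  have : Nonempty (Fin d) := ⟨⟨0, hd⟩⟩
  set m := (T + Δ - 1) / Δ
  have hTm : T ≤ m * Δ := Nat.le_add_sub_one_div_mul hΔ0
  have hV : 0 ≤ ∑ t ∈ range (T - 1), ‖ℓ (t + 1) - ℓ t‖ := sum_nonneg fun _ _ => norm_nonneg _
  rw [← sum_range_sum_Ico_mul_min _ hTm, ← sum_range_sum_Ico_mul_min _ hTm, ← sum_sub_distrib]
  calc _ ≤ ∑ k ∈ range m, (F + 2 * Δ *
          ∑ s ∈ Ico (k * Δ) (min ((k + 1) * Δ) (T - 1)), ‖ℓ (s + 1) - ℓ s‖) :=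
        sum_le_sum fun k hk => by
          linarith [hbatch k (mem_range.1 hk), iInf_sum_sub_sum_iInf_le_batch ℓ Δ T k]
    _ = m * F + 2 * Δ * ∑ t ∈ range (T - 1), ‖ℓ (t + 1) - ℓ t‖ := by
        rw [sum_add_distrib, sum_const, card_range, nsmul_eq_mul, ← mul_sum,
          sum_range_sum_Ico_mul_min _ (by omega)]
    _ ≤ _ := by gcongr; exact Nat.cast_add_sub_one_div_le hΔ0

/-- Restarting lemma: if over each of the `m = ⌈T/Δ⌉` consecutive batches of size at most
`Δ` the (static) regret is at most `F`, then the dynamic regret over the whole horizon is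
at most `(T/Δ + 1)F + 2Δ·V_T`, where `V_T` is the total variation of the losses. -/
theorem stmt_5 (d T Δ : ℕ) (hd : 0 < d) (hT : 0 < T) (hΔ0 : 0 < Δ) (hΔT : Δ ≤ T)
    (ℓ : ℕ → Fin d → ℝ) (π : ℕ → Fin d → ℝ)
    (hπ0 : ∀ t j, 0 ≤ π t j) (hπ1 : ∀ t, ∑ j, π t j = 1)
    (F : ℝ) (hF : 0 ≤ F)
    (hbatch : ∀ k < (T + Δ - 1) / Δ,
      (∑ t ∈ Finset.Ico (k * Δ) (min ((k + 1) * Δ) T), ∑ j, ℓ t j * π t j) -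
        (⨅ j : Fin d, ∑ t ∈ Finset.Ico (k * Δ) (min ((k + 1) * Δ) T), ℓ t j) ≤ F) :
    (∑ t ∈ range T, ∑ j, ℓ t j * π t j) - ∑ t ∈ range T, ⨅ j : Fin d, ℓ t j ≤
      ((T : ℝ) / (Δ : ℝ) + 1) * F + 2 * Δ * ∑ t ∈ range (T - 1), ‖ℓ (t + 1) - ℓ t‖ :=
  stmt_5_general d T Δ hd hΔ0 ℓ π F hF hbatch
end

section
/- Let T ≥ 2, R > 0, and let ℓ_1, …, ℓ_T be i.i.d. copies of a bounded random vector Z on ℝ^d that is symmetric about the origin, has positive-definite covariance Σ := E[ZZᵀ], and whose support contains an open ball around the origin. For A, C ∈ ℝ^{d×d} and β, δ ∈ ℝ^d define f(A, β, C, δ) := E[ ( Σ_{t=1}^T Σ_{i=1}^{t−1} ⟨ℓ_t, A ℓ_i ℓ_iᵀ β + C ℓ_i + δ⟩ + R ‖Σ_{t=1}^T ℓ_t‖₂ )² ]. Then f attains its global minimum at (A, β, C, δ) = (O, 0, C*, 0), where C* := −(2R/(T(T−1))) Σ^{−1} E[ ‖Σ_{j=1}^T ℓ_j‖₂ · Σ_{t=1}^T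 Σ_{i=1}^{t−1} ℓ_t ℓ_iᵀ ] Σ^{−1}; moreover, every global minimizer (A, β, C, δ) of f satisfies A ℓ ℓᵀ β + C ℓ + δ = C* ℓ for almost every ℓ distributed as Z, i.e., all global minimizers induce the same prediction map (ℓ_1, …, ℓ_t) ↦ Σ_{i=1}^t C* ℓ_i. -/
open MeasureTheory ProbabilityTheory Finset Matrix

/-!
Write the attention map as `y ↦ C* y + D y` with `D y = A y yᵀ β + (C - C*) y + δ`.
Since the `ℓ_t` are independent and symmetric, their joint law is invariant under flipping the
sign of any set of them. Flipping the later of two outer times kills every cross-time term, so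
`E[(Σ_t Σ_{i<t} ⟨ℓ_t, V ℓ_i⟩)(Σ_t Σ_{i<t} ⟨ℓ_t, W ℓ_i⟩)]` equals
`T(T-1)/2 · E[V(ℓ)ᵀ Σ W(ℓ)] + K · E[V(ℓ)]ᵀ Σ E[W(ℓ)]` with `K ≥ 0`.
In the cross term between the optimal residual and the perturbation `D`, the even part
`A y yᵀ β + δ` of `D` drops out by a global sign flip, and the linear part is multiplied by
`T(T-1)/2 · Σ C* Σ + R G`, which is zero by the definition of `C*`. Hence
`f(A, β, C, δ) = f(O, 0, C*, 0) + E[(Σ_t Σ_{i<t} ⟨ℓ_t, D ℓ_i⟩)²]`, and the remainder is at least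
`T(T-1)/2 · E[D(ℓ)ᵀ Σ D(ℓ)]`, which vanishes only if `D(ℓ) = 0` almost surely because `Σ ≻ 0`.
-/

section General

variable {Ω : Type*} [MeasurableSpace Ω] {μ : Measure Ω}

lemma Continuous.integrable_comp_of_forall_mem_compact {α : Type*} [TopologicalSpace α]
    [MeasurableSpace α] [OpensMeasurableSpace α] [IsFiniteMeasure μ] {F : α → ℝ}
    (hF : Continuous F) {X : Ω → α} (hX : Measurable X) {K : Set α} (hK : IsCompact K)
    (hXK : ∀ ω, X ω ∈ K) : Integrable (fun ω => F (X ω)) μ := by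
  obtain ⟨B, hB⟩ := hK.exists_bound_of_continuousOn hF.continuousOn
  exact (integrable_const B).mono' (hF.measurable.comp hX).aestronglyMeasurable
    (ae_of_all _ fun ω => hB _ (hXK ω))

lemma integral_finsetSum_finsetSum {ι κ : Type*} (s : Finset ι) (t : ι → Finset κ)
    {f : ι → κ → Ω → ℝ} (hf : ∀ i ∈ s, ∀ j ∈ t i, Integrable (f i j) μ) :
    ∫ ω, ∑ i ∈ s, ∑ j ∈ t i, f i j ω ∂μ = ∑ i ∈ s, ∑ j ∈ t i, ∫ ω, f i j ω ∂μ := by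
  rw [integral_finsetSum _ fun i hi => integrable_finsetSum _ (hf i hi)]
  exact Finset.sum_congr rfl fun i hi => integral_finsetSum _ (hf i hi)

namespace ProbabilityTheory

lemma iIndepFun.map_fun_eq_map_fun {ι β : Type*} [MeasurableSpace β] {X Y : ι → Ω → β}
    (hXm : ∀ i, Measurable (X i)) (hYm : ∀ i, Measurable (Y i)) (hX : iIndepFun X μ)
    (hY : iIndepFun Y μ) (hXY : ∀ i, μ.map (X i) = μ.map (Y i)) :
    μ.map (fun ω i => X i ω) = μ.map (fun ω i => Y i ω) := by
  rw [hX.map_fun_eq_infinitePi_map hXm, hY.map_fun_eq_infinitePi_map hYm]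
  simp_rw [hXY]

lemma IndepFun.integral_finsetSum_mul_comp {α β ι : Type*} [MeasurableSpace α] [MeasurableSpace β]
    {X : Ω → α} {Y : Ω → β} (hXY : IndepFun X Y μ) (hX : Measurable X) (hY : Measurable Y)
    (s : Finset ι) {φ : ι → α → ℝ} {ψ : ι → β → ℝ} (hφ : ∀ k, Measurable (φ k))
    (hψ : ∀ k, Measurable (ψ k))
    (hint : ∀ k ∈ s, Integrable (fun ω => φ k (X ω) * ψ k (Y ω)) μ) :
    ∫ ω, ∑ k ∈ s, φ k (X ω) * ψ k (Y ω) ∂μ =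
      ∑ k ∈ s, (∫ ω, φ k (X ω) ∂μ) * ∫ ω, ψ k (Y ω) ∂μ := by
  rw [integral_finsetSum _ hint]
  refine Finset.sum_congr rfl fun k _ => ?_
  exact (hXY.comp (hφ k) (hψ k)).integral_fun_mul_eq_mul_integral
    ((hφ k).comp hX).aestronglyMeasurable ((hψ k).comp hY).aestronglyMeasurable

end ProbabilityTheory

end General

section DotProduct

variable {n R : Type*} [Fintype n] [CommSemiring R]

lemma dotProduct_mul_dotProduct (x v y w : n → R) :
    (x ⬝ᵥ v) * (y ⬝ᵥ w) = ∑ p : n × n, x p.1 * y p.2 * (v p.1 * w p.2) := by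
  simp only [dotProduct, Finset.sum_mul_sum, Fintype.sum_prod_type]
  exact Finset.sum_congr rfl fun a _ => Finset.sum_congr rfl fun b _ => by ring

lemma dotProduct_mulVec_eq_sum (v : n → R) (M : Matrix n n R) (w : n → R) :
    v ⬝ᵥ M *ᵥ w = ∑ p : n × n, M p.1 p.2 * v p.1 * w p.2 := by
  simp only [dotProduct, mulVec, Finset.mul_sum, Fintype.sum_prod_type]
  exact Finset.sum_congr rfl fun a _ => Finset.sum_congr rfl fun b _ => by ring

end DotProduct

lemma sum_range_sum_range_sum_range_ite (T : ℕ) (Q q : ℝ) :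
    ∑ t ∈ range T, ∑ i ∈ range t, ∑ j ∈ range t, (if i = j then Q else q) =
      T * (T - 1) / 2 * Q + (∑ t ∈ range T, (t : ℝ) * (t - 1)) * q := by
  have hinner : ∀ t, ∀ i ∈ range t, ∑ j ∈ range t, (if i = j then Q else q) = Q + (t - 1) * q := by
    intro t i hi
    have : ∀ j, (if i = j then Q else q) = (if i = j then Q - q else 0) + q := by
      intro j; split_ifs <;> ring
    simp only [this, Finset.sum_add_distrib, Finset.sum_ite_eq, if_pos hi, sum_const, card_range,
      nsmul_eq_mul]
    ring
  rw [Finset.sum_congr rfl fun t _ => Finset.sum_congr rfl (hinner t)]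
  simp only [sum_const, card_range, nsmul_eq_mul]
  induction T with
  | zero => simp
  | succ T ih => rw [sum_range_succ, ih, sum_range_succ]; push_cast; ring

lemma smul_mul_mul_add_smul_eq_zero {n : Type*} [Fintype n] [DecidableEq n]
    {S G C : Matrix n n ℝ} (hS : IsUnit S.det) {c r : ℝ} (hc : c ≠ 0)
    (hC : C = -((r / c) • (S⁻¹ * G * S⁻¹))) : c • (S * C * S) + r • G = 0 := by
  have hG : S * (S⁻¹ * G * S⁻¹) * S = G := by
    simp only [Matrix.mul_assoc, nonsing_inv_mul S hS, Matrix.mul_one]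
    rw [← Matrix.mul_assoc, mul_nonsing_inv S hS, Matrix.one_mul]
  rw [hC, Matrix.mul_neg, Matrix.neg_mul, Matrix.mul_smul, Matrix.smul_mul, hG, smul_neg,
    smul_smul, mul_div_cancel₀ r hc, neg_add_cancel]

section Moments

variable {Ω : Type*} [MeasurableSpace Ω] {d : ℕ}

noncomputable def meanVec (μ : Measure Ω) (X : Ω → Fin d → ℝ) : Fin d → ℝ := fun a => ∫ ω, X ω a ∂μ

noncomputable def secondMoment (μ : Measure Ω) (X : Ω → Fin d → ℝ) : Matrix (Fin d) (Fin d) ℝ :=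
  Matrix.of fun a b => ∫ ω, X ω a * X ω b ∂μ

lemma integral_mulVec_dotProduct_mulVec {μ : Measure Ω} {X : Ω → Fin d → ℝ}
    (hX : ∀ a b, Integrable (fun ω => X ω a * X ω b) μ) (M N : Matrix (Fin d) (Fin d) ℝ) :
    ∫ ω, M *ᵥ X ω ⬝ᵥ N *ᵥ X ω ∂μ =
      ∑ p : Fin d × Fin d, M p.1 p.2 * (N * secondMoment μ X) p.1 p.2 := by
  have hexp : ∀ ω, M *ᵥ X ω ⬝ᵥ N *ᵥ X ω =
      ∑ p : Fin d × Fin d, ∑ c, M p.1 p.2 * N p.1 c * (X ω c * X ω p.2) := fun ω => by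
    simp only [dotProduct, mulVec, Finset.sum_mul_sum, Fintype.sum_prod_type]
    exact Finset.sum_congr rfl fun a _ => Finset.sum_congr rfl fun b _ =>
      Finset.sum_congr rfl fun c _ => by ring
  simp_rw [hexp]
  rw [integral_finsetSum_finsetSum _ _ fun p _ c _ => (hX c p.2).const_mul _]
  refine Finset.sum_congr rfl fun p _ => ?_
  simp only [integral_const_mul, mul_apply, secondMoment, of_apply, Finset.mul_sum, mul_assoc]

end Moments

section Regret

variable {d : ℕ}

noncomputable def pairSum (T : ℕ) (W : (Fin d → ℝ) → Fin d → ℝ) (x : ℕ → Fin d → ℝ) : ℝ :=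
  ∑ t ∈ range T, ∑ i ∈ range t, x t ⬝ᵥ W (x i)

noncomputable def sumNorm (T : ℕ) (x : ℕ → Fin d → ℝ) : ℝ :=
  √(∑ c, (∑ t ∈ range T, x t c) ^ 2)

lemma pairSum_eq_sum_dotProduct (T : ℕ) (W : (Fin d → ℝ) → Fin d → ℝ)
    (x : ℕ → Fin d → ℝ) : pairSum T W x = ∑ t ∈ range T, x t ⬝ᵥ ∑ i ∈ range t, W (x i) := by
  simp only [pairSum, dotProduct_sum]

@[fun_prop]
lemma continuous_pairSum (T : ℕ) {W : (Fin d → ℝ) → Fin d → ℝ} (hW : Continuous W) :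
    Continuous (pairSum T W) := by
  unfold pairSum; fun_prop

@[fun_prop]
lemma continuous_sumNorm (T : ℕ) : Continuous (sumNorm (d := d) T) := by
  unfold sumNorm; fun_prop

lemma pairSum_add (T : ℕ) (V W : (Fin d → ℝ) → Fin d → ℝ) (x : ℕ → Fin d → ℝ) :
    pairSum T (fun y => V y + W y) x = pairSum T V x + pairSum T W x := by
  simp only [pairSum, dotProduct_add, Finset.sum_add_distrib]

lemma pairSum_mulVec (T : ℕ) (M : Matrix (Fin d) (Fin d) ℝ) (x : ℕ → Fin d → ℝ) :
    pairSum T (M *ᵥ ·) x =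
      ∑ p : Fin d × Fin d, M p.1 p.2 * ∑ t ∈ range T, ∑ i ∈ range t, x t p.1 * x i p.2 := by
  simp only [pairSum, dotProduct_mulVec_eq_sum, Finset.mul_sum, mul_assoc]
  rw [Finset.sum_comm]
  exact Finset.sum_congr rfl fun t _ => Finset.sum_comm

variable {Ω : Type*} [MeasurableSpace Ω]

noncomputable def sumNormPairMoment (μ : Measure Ω) (ℓ : ℕ → Ω → Fin d → ℝ) (T : ℕ) :
    Matrix (Fin d) (Fin d) ℝ :=
  Matrix.of fun a b =>
    ∫ ω, sumNorm T (ℓ · ω) * ∑ t ∈ range T, ∑ i ∈ range t, ℓ t ω a * ℓ i ω b ∂μ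

def lsaMap (A : Matrix (Fin d) (Fin d) ℝ) (β : Fin d → ℝ) (C : Matrix (Fin d) (Fin d) ℝ)
    (δ : Fin d → ℝ) (y : Fin d → ℝ) : Fin d → ℝ :=
  (y ⬝ᵥ β) • (A *ᵥ y) + C *ᵥ y + δ

lemma lsaMap_sub (A : Matrix (Fin d) (Fin d) ℝ) (β : Fin d → ℝ) (C C' : Matrix (Fin d) (Fin d) ℝ)
    (δ y : Fin d → ℝ) : lsaMap A β (C - C') δ y = lsaMap A β C δ y - C' *ᵥ y := by
  simp only [lsaMap, sub_mulVec]
  abel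

noncomputable def regretLoss (μ : Measure Ω) (ℓ : ℕ → Ω → Fin d → ℝ) (T : ℕ) (R : ℝ)
    (W : (Fin d → ℝ) → Fin d → ℝ) : ℝ :=
  ∫ ω, (pairSum T W (ℓ · ω) + R * sumNorm T (ℓ · ω)) ^ 2 ∂μ

end Regret

structure IsBoundedSymmetricIID {Ω E : Type*} [MeasurableSpace Ω] [TopologicalSpace E]
    [MeasurableSpace E] [Neg E] (μ : Measure Ω) (ℓ : ℕ → Ω → E) : Prop where
  measurable : ∀ i, Measurable (ℓ i)
  indep : iIndepFun ℓ μ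
  map_eq : ∀ i, μ.map (ℓ i) = μ.map (ℓ 0)
  map_neg : ∀ i, μ.map (ℓ i) = μ.map (fun ω => -ℓ i ω)
  bounded : ∃ K, IsCompact K ∧ ∀ i ω, ℓ i ω ∈ K

namespace IsBoundedSymmetricIID

section General

variable {Ω E : Type*} [MeasurableSpace Ω] {μ : Measure Ω} [TopologicalSpace E]
  [MeasurableSpace E] {ℓ : ℕ → Ω → E}

lemma integrable_comp [Neg E] [IsFiniteMeasure μ] [OpensMeasurableSpace E]
    [SecondCountableTopology E] (h : IsBoundedSymmetricIID μ ℓ) {F : (ℕ → E) → ℝ}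
    (hF : Continuous F) : Integrable (fun ω => F (ℓ · ω)) μ := by
  obtain ⟨K, hK, hℓK⟩ := h.bounded
  exact hF.integrable_comp_of_forall_mem_compact (measurable_pi_lambda _ h.measurable)
    (isCompact_univ_pi fun _ => hK) fun ω => Set.mem_univ_pi.2 fun i => hℓK i ω

lemma integral_comp_eq [Neg E] (h : IsBoundedSymmetricIID μ ℓ) (i : ℕ) {φ : E → ℝ}
    (hφ : Measurable φ) : ∫ ω, φ (ℓ i ω) ∂μ = ∫ ω, φ (ℓ 0 ω) ∂μ := by
  rw [← integral_map (h.measurable i).aemeasurable hφ.aestronglyMeasurable, h.map_eq i,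
    integral_map (h.measurable 0).aemeasurable hφ.aestronglyMeasurable]

variable [InvolutiveNeg E] [MeasurableNeg E]

lemma integral_comp_flip (h : IsBoundedSymmetricIID μ ℓ) (s : Finset ℕ) {F : (ℕ → E) → ℝ}
    (hF : Measurable F) :
    ∫ ω, F (fun i => if i ∈ s then -ℓ i ω else ℓ i ω) ∂μ = ∫ ω, F (ℓ · ω) ∂μ := by
  let flip : ℕ → E → E := fun i y => if i ∈ s then -y else y
  have hflip : ∀ i, Measurable (flip i) := fun i => by
    by_cases hi : i ∈ s <;> simp [flip, hi, measurable_neg, measurable_id']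
  have hmeas : ∀ i, Measurable (fun ω => flip i (ℓ i ω)) := fun i => (hflip i).comp (h.measurable i)
  have hlaw : μ.map (fun ω i => flip i (ℓ i ω)) = μ.map (fun ω i => ℓ i ω) :=
    iIndepFun.map_fun_eq_map_fun hmeas h.measurable (h.indep.comp flip hflip) h.indep
      fun i => by by_cases hi : i ∈ s <;> simp [flip, hi, h.map_neg i]
  rw [← integral_map (measurable_pi_lambda _ hmeas).aemeasurable hF.aestronglyMeasurable,
    hlaw, integral_map (measurable_pi_lambda _ h.measurable).aemeasurable
      hF.aestronglyMeasurable]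

lemma integral_comp_eq_zero_of_flip (h : IsBoundedSymmetricIID μ ℓ) (s : Finset ℕ)
    {F : (ℕ → E) → ℝ} (hF : Measurable F)
    (hodd : ∀ x, F (fun i => if i ∈ s then -x i else x i) = -F x) :
    ∫ ω, F (ℓ · ω) ∂μ = 0 := by
  have := h.integral_comp_flip s hF
  simp only [hodd, integral_neg] at this
  linarith

lemma integral_comp_eq_zero_of_odd (h : IsBoundedSymmetricIID μ ℓ) (i : ℕ) {φ : E → ℝ}
    (hφ : Measurable φ) (hodd : ∀ y, φ (-y) = -φ y) : ∫ ω, φ (ℓ i ω) ∂μ = 0 :=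
  h.integral_comp_eq_zero_of_flip {i} (F := fun x => φ (x i)) (hφ.comp (measurable_pi_apply i))
    fun x => by simpa using hodd (x i)

end General

section Regret

variable {Ω : Type*} [MeasurableSpace Ω] {μ : Measure Ω} {d : ℕ} {ℓ : ℕ → Ω → Fin d → ℝ}
  {V W : (Fin d → ℝ) → Fin d → ℝ}

lemma meanVec_mulVec_eq_zero (h : IsBoundedSymmetricIID μ ℓ) (N : Matrix (Fin d) (Fin d) ℝ) :
    meanVec μ ((N *ᵥ ·) ∘ ℓ 0) = 0 :=
  funext fun a => h.integral_comp_eq_zero_of_odd 0 (φ := fun y => (N *ᵥ y) a) (by fun_prop)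
    fun y => by simp [mulVec_neg]

lemma integral_dotProduct_mul_dotProduct [IsFiniteMeasure μ] (h : IsBoundedSymmetricIID μ ℓ)
    (hV : Continuous V) (hW : Continuous W) {t i j : ℕ} (hi : i ≠ t) (hj : j ≠ t) :
    ∫ ω, (ℓ t ω ⬝ᵥ V (ℓ i ω)) * (ℓ t ω ⬝ᵥ W (ℓ j ω)) ∂μ =
      ∫ ω, V (ℓ i ω) ⬝ᵥ secondMoment μ (ℓ 0) *ᵥ W (ℓ j ω) ∂μ := by
  have hind : IndepFun (ℓ t) (fun ω => (ℓ i ω, ℓ j ω)) μ :=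
    (h.indep.indepFun_prodMk h.measurable i j t hi hj).symm
  simp_rw [dotProduct_mul_dotProduct, dotProduct_mulVec_eq_sum]
  rw [hind.integral_finsetSum_mul_comp (h.measurable t)
      ((h.measurable i).prodMk (h.measurable j)) univ
      (φ := fun (p : Fin d × Fin d) x => x p.1 * x p.2)
      (ψ := fun (p : Fin d × Fin d) u => V u.1 p.1 * W u.2 p.2) (by fun_prop)
      (fun p => by fun_prop) fun p _ => h.integrable_comp
        (F := fun x => x t p.1 * x t p.2 * (V (x i) p.1 * W (x j) p.2)) (by fun_prop),
    integral_finsetSum _ fun p _ => h.integrable_comp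
      (F := fun x => secondMoment μ (ℓ 0) p.1 p.2 * V (x i) p.1 * W (x j) p.2) (by fun_prop)]
  refine Finset.sum_congr rfl fun p _ => ?_
  rw [h.integral_comp_eq t (φ := fun x => x p.1 * x p.2) (by fun_prop)]
  simp_rw [mul_assoc, integral_const_mul]
  rfl

lemma integral_dotProduct_mulVec_of_ne [IsFiniteMeasure μ] (h : IsBoundedSymmetricIID μ ℓ)
    (hV : Continuous V) (hW : Continuous W) (M : Matrix (Fin d) (Fin d) ℝ) {i j : ℕ} (hij : i ≠ j) :
    ∫ ω, V (ℓ i ω) ⬝ᵥ M *ᵥ W (ℓ j ω) ∂μ =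
      meanVec μ (V ∘ ℓ 0) ⬝ᵥ M *ᵥ meanVec μ (W ∘ ℓ 0) := by
  simp_rw [dotProduct_mulVec_eq_sum]
  rw [(h.indep.indepFun hij).integral_finsetSum_mul_comp (h.measurable i) (h.measurable j) univ
      (φ := fun (p : Fin d × Fin d) u => M p.1 p.2 * V u p.1)
      (ψ := fun (p : Fin d × Fin d) u => W u p.2) (fun p => by fun_prop)
      (fun p => by fun_prop) fun p _ => h.integrable_comp
        (F := fun x => M p.1 p.2 * V (x i) p.1 * W (x j) p.2) (by fun_prop)]
  refine Finset.sum_congr rfl fun p _ => ?_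
  rw [h.integral_comp_eq i (φ := fun u => M p.1 p.2 * V u p.1) (by fun_prop),
    h.integral_comp_eq j (φ := fun u => W u p.2) (by fun_prop), integral_const_mul]
  rfl

lemma integral_dotProduct_sum_mul_eq_zero (h : IsBoundedSymmetricIID μ ℓ) (hV : Measurable V)
    (hW : Measurable W) {t t' : ℕ} (htt' : t ≠ t') :
    ∫ ω, (ℓ t ω ⬝ᵥ ∑ i ∈ range t, V (ℓ i ω)) * (ℓ t' ω ⬝ᵥ ∑ j ∈ range t', W (ℓ j ω)) ∂μ =
      0 := by
  wlog hlt : t < t' generalizing t t' V W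
  · simp_rw [mul_comm (ℓ t _ ⬝ᵥ _)]
    exact this hW hV htt'.symm (by omega)
  refine h.integral_comp_eq_zero_of_flip {t'} (F := fun x =>
    (x t ⬝ᵥ ∑ i ∈ range t, V (x i)) * (x t' ⬝ᵥ ∑ j ∈ range t', W (x j))) (by fun_prop)
    fun x => ?_
  have hkeep : ∀ k < t', (if k ∈ ({t'} : Finset ℕ) then -x k else x k) = x k := fun k hk => by
    simp [hk.ne]
  have hsum : ∀ (U : (Fin d → ℝ) → Fin d → ℝ) (n : ℕ), n ≤ t' →
      ∑ i ∈ range n, U (if i ∈ ({t'} : Finset ℕ) then -x i else x i) =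
        ∑ i ∈ range n, U (x i) := fun U n hn =>
    Finset.sum_congr rfl fun i hi => by rw [hkeep i (by simp at hi; omega)]
  beta_reduce
  rw [hkeep t hlt, hsum V t hlt.le, hsum W t' le_rfl, if_pos (mem_singleton_self t'),
    neg_dotProduct, mul_neg]

lemma integral_pairSum_mul_pairSum [IsFiniteMeasure μ] (h : IsBoundedSymmetricIID μ ℓ)
    (hV : Continuous V) (hW : Continuous W) (T : ℕ) :
    ∫ ω, pairSum T V (ℓ · ω) * pairSum T W (ℓ · ω) ∂μ =
      T * (T - 1) / 2 * ∫ ω, V (ℓ 0 ω) ⬝ᵥ secondMoment μ (ℓ 0) *ᵥ W (ℓ 0 ω) ∂μ +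
        (∑ t ∈ range T, (t : ℝ) * (t - 1)) *
          (meanVec μ (V ∘ ℓ 0) ⬝ᵥ secondMoment μ (ℓ 0) *ᵥ meanVec μ (W ∘ ℓ 0)) := by
  rw [← sum_range_sum_range_sum_range_ite]
  simp_rw [pairSum_eq_sum_dotProduct, Finset.sum_mul_sum]
  rw [integral_finsetSum_finsetSum _ _ fun t _ t' _ => h.integrable_comp (F := fun x =>
    (x t ⬝ᵥ ∑ i ∈ range t, V (x i)) * (x t' ⬝ᵥ ∑ j ∈ range t', W (x j))) (by fun_prop)]
  refine Finset.sum_congr rfl fun t ht => ?_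
  rw [Finset.sum_eq_single t (fun t' _ ht' => h.integral_dotProduct_sum_mul_eq_zero
    hV.measurable hW.measurable (Ne.symm ht')) (absurd ht)]
  simp_rw [dotProduct_sum, Finset.sum_mul_sum]
  rw [integral_finsetSum_finsetSum _ _ fun i _ j _ => h.integrable_comp (F := fun x =>
    (x t ⬝ᵥ V (x i)) * (x t ⬝ᵥ W (x j))) (by fun_prop)]
  refine Finset.sum_congr rfl fun i hi => Finset.sum_congr rfl fun j hj => ?_
  rw [h.integral_dotProduct_mul_dotProduct hV hW (mem_range.1 hi).ne (mem_range.1 hj).ne]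
  split_ifs with hij
  · subst hij
    exact h.integral_comp_eq i (φ := fun y => V y ⬝ᵥ secondMoment μ (ℓ 0) *ᵥ W y) (by fun_prop)
  · exact h.integral_dotProduct_mulVec_of_ne hV hW _ hij

lemma integral_sumNorm_mul_pairSum_eq_zero (h : IsBoundedSymmetricIID μ ℓ) (hV : Continuous V)
    (heven : ∀ y, V (-y) = V y) (T : ℕ) :
    ∫ ω, sumNorm T (ℓ · ω) * pairSum T V (ℓ · ω) ∂μ = 0 := by
  refine h.integral_comp_eq_zero_of_flip (range T) (F := fun x => sumNorm T x * pairSum T V x)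
    (by fun_prop) fun x => ?_
  have hnorm : sumNorm T (fun i => if i ∈ range T then -x i else x i) = sumNorm T x := by
    unfold sumNorm
    beta_reduce
    congr 1
    refine Finset.sum_congr rfl fun c _ => ?_
    rw [Finset.sum_congr rfl fun t ht => by rw [if_pos ht]]
    simp [Finset.sum_neg_distrib]
  have hpair : pairSum T V (fun i => if i ∈ range T then -x i else x i) = -pairSum T V x := by
    unfold pairSum
    simp only [← Finset.sum_neg_distrib]
    refine Finset.sum_congr rfl fun t ht => Finset.sum_congr rfl fun i hi => ?_
    rw [if_pos ht, if_pos (mem_range.2 ((mem_range.1 hi).trans (mem_range.1 ht))), heven,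
      neg_dotProduct]
  simp only [hnorm, hpair, mul_neg]

lemma integral_sumNorm_mul_pairSum_mulVec [IsFiniteMeasure μ] (h : IsBoundedSymmetricIID μ ℓ)
    (M : Matrix (Fin d) (Fin d) ℝ) (T : ℕ) :
    ∫ ω, sumNorm T (ℓ · ω) * pairSum T (M *ᵥ ·) (ℓ · ω) ∂μ =
      ∑ p : Fin d × Fin d, M p.1 p.2 * sumNormPairMoment μ ℓ T p.1 p.2 := by
  have hexp : ∀ x, sumNorm T x * pairSum T (M *ᵥ ·) x = ∑ p : Fin d × Fin d,
      M p.1 p.2 * (sumNorm T x * ∑ t ∈ range T, ∑ i ∈ range t, x t p.1 * x i p.2) := fun x => by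
    rw [pairSum_mulVec, Finset.mul_sum]
    exact Finset.sum_congr rfl fun p _ => mul_left_comm _ _ _
  simp_rw [hexp]
  rw [integral_finsetSum _ fun p _ => h.integrable_comp (F := fun x => M p.1 p.2 *
    (sumNorm T x * ∑ t ∈ range T, ∑ i ∈ range t, x t p.1 * x i p.2)) (by fun_prop)]
  simp_rw [integral_const_mul]
  rfl

lemma integral_mul_pairSum_eq_zero [IsFiniteMeasure μ] (h : IsBoundedSymmetricIID μ ℓ)
    {T : ℕ} {R : ℝ} {C : Matrix (Fin d) (Fin d) ℝ}
    (hC : (T * (T - 1) / 2 : ℝ) • (secondMoment μ (ℓ 0) * C * secondMoment μ (ℓ 0)) +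
      R • sumNormPairMoment μ ℓ T = 0)
    (hV : Continuous V) (heven : ∀ y, V (-y) = V y) (M : Matrix (Fin d) (Fin d) ℝ) :
    ∫ ω, (pairSum T (C *ᵥ ·) (ℓ · ω) + R * sumNorm T (ℓ · ω)) *
      pairSum T (fun y => V y + M *ᵥ y) (ℓ · ω) ∂μ = 0 := by
  set S := secondMoment μ (ℓ 0)
  have hQ : ∫ ω, (V (ℓ 0 ω) + M *ᵥ ℓ 0 ω) ⬝ᵥ S *ᵥ C *ᵥ ℓ 0 ω ∂μ =
      ∑ p : Fin d × Fin d, M p.1 p.2 * (S * C * S) p.1 p.2 := by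
    simp_rw [add_dotProduct, mulVec_mulVec]
    rw [integral_add (h.integrable_comp (F := fun x => V (x 0) ⬝ᵥ (S * C) *ᵥ x 0) (by fun_prop))
        (h.integrable_comp (F := fun x => M *ᵥ x 0 ⬝ᵥ (S * C) *ᵥ x 0) (by fun_prop)),
      h.integral_comp_eq_zero_of_odd 0 (φ := fun y => V y ⬝ᵥ (S * C) *ᵥ y) (by fun_prop)
        fun y => by simp [heven, mulVec_neg],
      zero_add, integral_mulVec_dotProduct_mulVec
        (fun a b => h.integrable_comp (F := fun x => x 0 a * x 0 b) (by fun_prop))]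
  have hpair : ∫ ω, pairSum T (fun y => V y + M *ᵥ y) (ℓ · ω) * pairSum T (C *ᵥ ·) (ℓ · ω) ∂μ =
      T * (T - 1) / 2 * ∑ p : Fin d × Fin d, M p.1 p.2 * (S * C * S) p.1 p.2 := by
    rw [h.integral_pairSum_mul_pairSum (by fun_prop) (by fun_prop), h.meanVec_mulVec_eq_zero,
      mulVec_zero, dotProduct_zero, mul_zero, add_zero, ← hQ]
  have hnorm : ∫ ω, sumNorm T (ℓ · ω) * pairSum T (fun y => V y + M *ᵥ y) (ℓ · ω) ∂μ =
      ∑ p : Fin d × Fin d, M p.1 p.2 * sumNormPairMoment μ ℓ T p.1 p.2 := by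
    simp_rw [pairSum_add, mul_add]
    rw [integral_add (h.integrable_comp (F := fun x => sumNorm T x * pairSum T V x)
        (by fun_prop)) (h.integrable_comp (F := fun x => sumNorm T x * pairSum T (M *ᵥ ·) x)
        (by fun_prop)), h.integral_sumNorm_mul_pairSum_eq_zero hV heven, zero_add,
      h.integral_sumNorm_mul_pairSum_mulVec]
  calc _ = ∫ ω, pairSum T (fun y => V y + M *ᵥ y) (ℓ · ω) * pairSum T (C *ᵥ ·) (ℓ · ω) ∂μ +
        R * ∫ ω, sumNorm T (ℓ · ω) * pairSum T (fun y => V y + M *ᵥ y) (ℓ · ω) ∂μ := by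
        rw [← integral_const_mul, ← integral_add]
        · exact integral_congr_ae (ae_of_all _ fun ω => by ring)
        · exact h.integrable_comp (F := fun x =>
            pairSum T (fun y => V y + M *ᵥ y) x * pairSum T (C *ᵥ ·) x) (by fun_prop)
        · exact (h.integrable_comp (F := fun x =>
            sumNorm T x * pairSum T (fun y => V y + M *ᵥ y) x) (by fun_prop)).const_mul R
    _ = ∑ p : Fin d × Fin d, M p.1 p.2 *
        ((T * (T - 1) / 2 : ℝ) • (S * C * S) + R • sumNormPairMoment μ ℓ T) p.1 p.2 := by
        rw [hpair, hnorm, Finset.mul_sum, Finset.mul_sum, ← Finset.sum_add_distrib]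
        refine Finset.sum_congr rfl fun p _ => ?_
        simp only [Matrix.add_apply, Matrix.smul_apply, smul_eq_mul]
        ring
    _ = 0 := by rw [hC]; simp

lemma regretLoss_lsaMap [IsFiniteMeasure μ] (h : IsBoundedSymmetricIID μ ℓ) {T : ℕ} {R : ℝ}
    {C' : Matrix (Fin d) (Fin d) ℝ}
    (hC' : (T * (T - 1) / 2 : ℝ) • (secondMoment μ (ℓ 0) * C' * secondMoment μ (ℓ 0)) +
      R • sumNormPairMoment μ ℓ T = 0)
    (A : Matrix (Fin d) (Fin d) ℝ) (β : Fin d → ℝ) (C : Matrix (Fin d) (Fin d) ℝ)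
    (δ : Fin d → ℝ) :
    regretLoss μ ℓ T R (lsaMap A β C δ) = regretLoss μ ℓ T R (lsaMap 0 0 C' 0) +
      ∫ ω, pairSum T (lsaMap A β (C - C') δ) (ℓ · ω) ^ 2 ∂μ := by
  set D := lsaMap A β (C - C') δ
  have hC'map : lsaMap 0 0 C' 0 = (C' *ᵥ ·) := funext fun y => by simp [lsaMap]
  have hsplit : lsaMap A β C δ = fun y => C' *ᵥ y + D y :=
    funext fun y => by simp only [D, lsaMap_sub]; abel
  have hD : D = fun y => ((y ⬝ᵥ β) • (A *ᵥ y) + δ) + (C - C') *ᵥ y :=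
    funext fun y => by simp only [D, lsaMap]; abel
  have hexp : ∀ x, (pairSum T (lsaMap A β C δ) x + R * sumNorm T x) ^ 2 =
      (pairSum T (C' *ᵥ ·) x + R * sumNorm T x) ^ 2 +
        2 * ((pairSum T (C' *ᵥ ·) x + R * sumNorm T x) * pairSum T D x) + pairSum T D x ^ 2 :=
    fun x => by rw [hsplit, pairSum_add]; ring
  have hcross := h.integral_mul_pairSum_eq_zero hC' (V := fun y => (y ⬝ᵥ β) • (A *ᵥ y) + δ)
    (by fun_prop) (fun y => by simp [mulVec_neg]) (C - C')
  rw [← hD] at hcross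
  have hDc : Continuous D := by rw [hD]; fun_prop
  have hbase := h.integrable_comp (F := fun x => (pairSum T (C' *ᵥ ·) x + R * sumNorm T x) ^ 2)
    (by fun_prop)
  have hmix := (h.integrable_comp (F := fun x =>
    (pairSum T (C' *ᵥ ·) x + R * sumNorm T x) * pairSum T D x) (by fun_prop)).const_mul 2
  have hsq := h.integrable_comp (F := fun x => pairSum T D x ^ 2) (by fun_prop)
  unfold regretLoss
  simp_rw [hexp, hC'map]
  rw [integral_add (by exact hbase.add hmix) hsq, integral_add hbase hmix, integral_const_mul,
    hcross, mul_zero, add_zero]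

lemma ae_eq_zero_of_integral_pairSum_sq_eq_zero [IsFiniteMeasure μ]
    (h : IsBoundedSymmetricIID μ ℓ) {W : (Fin d → ℝ) → Fin d → ℝ} (hW : Continuous W) {T : ℕ}
    (hT : 2 ≤ T) (hS : (secondMoment μ (ℓ 0)).PosDef)
    (h0 : ∫ ω, pairSum T W (ℓ · ω) ^ 2 ∂μ = 0) : ∀ᵐ ω ∂μ, W (ℓ 0 ω) = 0 := by
  set S := secondMoment μ (ℓ 0)
  have hquad : ∀ v, 0 ≤ v ⬝ᵥ S *ᵥ v := fun v => by
    simpa using hS.posSemidef.dotProduct_mulVec_nonneg v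
  have hK : 0 ≤ ∑ t ∈ range T, (t : ℝ) * (t - 1) := Finset.sum_nonneg fun t _ => by
    rcases t with _ | t
    · simp
    · push_cast; nlinarith
  have hT' : (0 : ℝ) < T * (T - 1) / 2 := by
    have : (2 : ℝ) ≤ T := by exact_mod_cast hT
    nlinarith
  have hQ0 : ∫ ω, W (ℓ 0 ω) ⬝ᵥ S *ᵥ W (ℓ 0 ω) ∂μ = 0 := by
    have hsum := h.integral_pairSum_mul_pairSum hW hW T
    simp_rw [← sq, h0] at hsum
    have hQ : 0 ≤ ∫ ω, W (ℓ 0 ω) ⬝ᵥ S *ᵥ W (ℓ 0 ω) ∂μ :=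
      integral_nonneg fun ω => hquad (W (ℓ 0 ω))
    nlinarith [mul_nonneg hK (hquad (meanVec μ (W ∘ ℓ 0)))]
  have hint := h.integrable_comp (F := fun x => W (x 0) ⬝ᵥ S *ᵥ W (x 0)) (by fun_prop)
  filter_upwards [(integral_eq_zero_iff_of_nonneg (fun ω => hquad _) hint).1 hQ0] with ω hω
  by_contra hne
  have := hS.dotProduct_mulVec_pos hne
  rw [star_trivial] at this
  exact this.ne' hω

end Regret

end IsBoundedSymmetricIID

theorem stmt_15_general {Ω : Type*} [MeasurableSpace Ω] (μ : Measure Ω) [IsProbabilityMeasure μ]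
    (d T : ℕ) (hT : 2 ≤ T) (R : ℝ)
    (ℓ : ℕ → Ω → Fin d → ℝ) (hmeas : ∀ i, Measurable (ℓ i))
    (hindep : iIndepFun ℓ μ)
    (hident : ∀ i, Measure.map (ℓ i) μ = Measure.map (ℓ 0) μ)
    (hsymm : ∀ i, Measure.map (ℓ i) μ = Measure.map (fun ω => -ℓ i ω) μ)
    (Cb : ℝ) (hbdd : ∀ i ω a, |ℓ i ω a| ≤ Cb)
    (S : Matrix (Fin d) (Fin d) ℝ) (hS : ∀ a b, S a b = ∫ ω, ℓ 0 ω a * ℓ 0 ω b ∂μ)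
    (hSpd : S.PosDef)
    (Cstar : Matrix (Fin d) (Fin d) ℝ)
    (hCstar : Cstar = -((2 * R / ((T : ℝ) * ((T : ℝ) - 1))) •
      (S⁻¹ * (Matrix.of fun a b =>
        ∫ ω, Real.sqrt (∑ c, (∑ t ∈ range T, ℓ t ω c) ^ 2) *
          (∑ t ∈ range T, ∑ i ∈ range t, ℓ t ω a * ℓ i ω b) ∂μ) * S⁻¹)))
    (f : Matrix (Fin d) (Fin d) ℝ → (Fin d → ℝ) → Matrix (Fin d) (Fin d) ℝ →
      (Fin d → ℝ) → ℝ)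
    (hf : ∀ A β C δ, f A β C δ = ∫ ω,
      ((∑ t ∈ range T, ∑ i ∈ range t,
          ℓ t ω ⬝ᵥ ((ℓ i ω ⬝ᵥ β) • (A *ᵥ ℓ i ω) + C *ᵥ ℓ i ω + δ)) +
        R * Real.sqrt (∑ c, (∑ t ∈ range T, ℓ t ω c) ^ 2)) ^ 2 ∂μ) :
    (∀ A β C δ, f 0 0 Cstar 0 ≤ f A β C δ) ∧
    (∀ A β C δ, (∀ A' β' C' δ', f A β C δ ≤ f A' β' C' δ') →
      ∀ᵐ ω ∂μ, (ℓ 0 ω ⬝ᵥ β) • (A *ᵥ ℓ 0 ω) + C *ᵥ ℓ 0 ω + δ = Cstar *ᵥ ℓ 0 ω) := by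
  have hℓ : IsBoundedSymmetricIID μ ℓ := ⟨hmeas, hindep, hident, hsymm,
    Set.univ.pi fun _ => Set.Icc (-Cb) Cb, isCompact_univ_pi fun _ => isCompact_Icc,
    fun i ω => Set.mem_univ_pi.2 fun a => abs_le.1 (hbdd i ω a)⟩
  obtain rfl : S = secondMoment μ (ℓ 0) := Matrix.ext hS
  set S := secondMoment μ (ℓ 0)
  have hT' : (0 : ℝ) < T * (T - 1) / 2 := by
    have : (2 : ℝ) ≤ T := by exact_mod_cast hT
    nlinarith
  have hstat : (T * (T - 1) / 2 : ℝ) • (S * Cstar * S) + R • sumNormPairMoment μ ℓ T = 0 :=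
    smul_mul_mul_add_smul_eq_zero hSpd.det_pos.ne'.isUnit hT'.ne' (by
      rw [hCstar, show 2 * R / ((T : ℝ) * (T - 1)) = R / (T * (T - 1) / 2) by
        rw [div_div_eq_mul_div, mul_comm]]
      rfl)
  have hdecomp : ∀ A β C δ, f A β C δ =
      f 0 0 Cstar 0 + ∫ ω, pairSum T (lsaMap A β (C - Cstar) δ) (ℓ · ω) ^ 2 ∂μ :=
    fun A β C δ => by
      rw [hf, hf]
      exact hℓ.regretLoss_lsaMap hstat A β C δ
  refine ⟨fun A β C δ => ?_, fun A β C δ hmin => ?_⟩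
  · rw [hdecomp A β C δ]
    exact le_add_of_nonneg_right (integral_nonneg fun ω => sq_nonneg _)
  · have h0 : ∫ ω, pairSum T (lsaMap A β (C - Cstar) δ) (ℓ · ω) ^ 2 ∂μ = 0 :=
      le_antisymm (by linarith [hdecomp A β C δ, hmin 0 0 Cstar 0])
        (integral_nonneg fun ω => sq_nonneg _)
    filter_upwards [hℓ.ae_eq_zero_of_integral_pairSum_sq_eq_zero (by unfold lsaMap; fun_prop)
      hT hSpd h0] with ω hω
    rwa [lsaMap_sub, sub_eq_zero] at hω

/-- Regret-loss–trained single-layer linear self-attention implements an online-gradient-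
descent–type update: the regret-loss `f(A, β, C, δ)` attains its global minimum at
`(O, 0, C*, 0)` with `C* = −(2R/(T(T−1))) Σ⁻¹ E[‖Σ_j ℓ_j‖₂ Σ_t Σ_{i<t} ℓ_t ℓ_iᵀ] Σ⁻¹`,
and every global minimizer induces the same prediction map `ℓ ↦ C* ℓ` almost surely. -/
theorem stmt_15 {Ω : Type*} [MeasurableSpace Ω] (μ : Measure Ω) [IsProbabilityMeasure μ]
    (d T : ℕ) (hd : 0 < d) (hT : 2 ≤ T) (R : ℝ) (hR : 0 < R)
    (ℓ : ℕ → Ω → Fin d → ℝ) (hmeas : ∀ i, Measurable (ℓ i))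
    (hindep : iIndepFun ℓ μ)
    (hident : ∀ i, Measure.map (ℓ i) μ = Measure.map (ℓ 0) μ)
    (hsymm : ∀ i, Measure.map (ℓ i) μ = Measure.map (fun ω => -ℓ i ω) μ)
    (Cb : ℝ) (hbdd : ∀ i ω a, |ℓ i ω a| ≤ Cb)
    (S : Matrix (Fin d) (Fin d) ℝ) (hS : ∀ a b, S a b = ∫ ω, ℓ 0 ω a * ℓ 0 ω b ∂μ)
    (hSpd : S.PosDef)
    (hsupp : ∃ r > (0 : ℝ), ∀ x : Fin d → ℝ, ‖x‖ < r → ∀ ε > (0 : ℝ),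
      0 < Measure.map (ℓ 0) μ (Metric.ball x ε))
    (Cstar : Matrix (Fin d) (Fin d) ℝ)
    (hCstar : Cstar = -((2 * R / ((T : ℝ) * ((T : ℝ) - 1))) •
      (S⁻¹ * (Matrix.of fun a b =>
        ∫ ω, Real.sqrt (∑ c, (∑ t ∈ range T, ℓ t ω c) ^ 2) *
          (∑ t ∈ range T, ∑ i ∈ range t, ℓ t ω a * ℓ i ω b) ∂μ) * S⁻¹)))
    (f : Matrix (Fin d) (Fin d) ℝ → (Fin d → ℝ) → Matrix (Fin d) (Fin d) ℝ →
      (Fin d → ℝ) → ℝ)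
    (hf : ∀ A β C δ, f A β C δ = ∫ ω,
      ((∑ t ∈ range T, ∑ i ∈ range t,
          ℓ t ω ⬝ᵥ ((ℓ i ω ⬝ᵥ β) • (A *ᵥ ℓ i ω) + C *ᵥ ℓ i ω + δ)) +
        R * Real.sqrt (∑ c, (∑ t ∈ range T, ℓ t ω c) ^ 2)) ^ 2 ∂μ) :
    (∀ A β C δ, f 0 0 Cstar 0 ≤ f A β C δ) ∧
    (∀ A β C δ, (∀ A' β' C' δ', f A β C δ ≤ f A' β' C' δ') →
      ∀ᵐ ω ∂μ, (ℓ 0 ω ⬝ᵥ β) • (A *ᵥ ℓ 0 ω) + C *ᵥ ℓ 0 ω + δ = Cstar *ᵥ ℓ 0 ω) :=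
  stmt_15_general μ d T hT R ℓ hmeas hindep hident hsymm Cb hbdd S hS hSpd Cstar hCstar f hf
end
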